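/- Principle of correspondence at integer order: for n a positive natural number and f continuous on [a, x], R^n(f)(x) equals the n-fold iterated integral ∫ₐ^x ∫ₐ^{t₁} … ∫ₐ^{t_{n−1}} f(t_n) dt_n … dt₁ (Cauchy's formula for repeated integration). -/

import Mathlib

/-!
Induction on `n`. Since `J^{n+1} f = J^n (J f)`, the induction hypothesis applied to `J f` reduces
the step to `∫ₐᵇ (b - y)^(n+1) f(y) dy = (n + 1) ∫ₐᵇ (b - y)^n (J f)(y) dy`, a single integration by
parts in which both boundary terms vanish: `J f` at `a` and `(b - y)^(n+1)` at `b`.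
-/

open MeasureTheory intervalIntegral Real

noncomputable def iterInt (a : ℝ) : ℕ → (ℝ → ℝ) → ℝ → ℝ
  | 0, f => f
  | n + 1, f => fun x => ∫ t in a..x, iterInt a n f t

open Set Nat
open scoped Interval

theorem iterInt_succ' (a : ℝ) (n : ℕ) (f : ℝ → ℝ) :
    iterInt a (n + 1) f = iterInt a n (fun x => ∫ t in a..x, f t) := by
  induction n with
  | zero => rfl
  | succ n ih => exact congrArg (fun g x => ∫ t in a..x, g t) ih

theorem ContinuousOn.continuousOn_primitive {a b : ℝ} {g : ℝ → ℝ}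
    (hg : ContinuousOn g [[a, b]]) : ContinuousOn (fun x => ∫ t in a..x, g t) [[a, b]] :=
  continuousOn_primitive_interval hg.integrableOn_uIcc

theorem ContinuousOn.hasDerivAt_primitive {a b x : ℝ} {g : ℝ → ℝ}
    (hg : ContinuousOn g [[a, b]]) (hx : x ∈ Ioo (min a b) (max a b)) :
    HasDerivAt (fun y => ∫ t in a..y, g t) (g x) x :=
  integral_hasDerivAt_right
    (hg.mono (uIcc_subset_uIcc_left (Ioo_subset_Icc_self hx))).intervalIntegrable
    ((hg.mono Ioo_subset_Icc_self).stronglyMeasurableAtFilter isOpen_Ioo x hx)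
    (hg.continuousAt (Icc_mem_nhds hx.1 hx.2))

theorem integral_sub_pow_mul_primitive {a b : ℝ} {g : ℝ → ℝ} (hg : ContinuousOn g [[a, b]])
    (n : ℕ) :
    ∫ y in a..b, (b - y) ^ n * ∫ t in a..y, g t =
      (∫ y in a..b, (b - y) ^ (n + 1) * g y) / (n + 1) := by
  have hv : ∀ y, HasDerivAt (fun y => -(b - y) ^ (n + 1) / (n + 1)) ((b - y) ^ n) y := by
    intro y
    refine ((((hasDerivAt_id' y).const_sub b).fun_pow (n + 1)).fun_neg.div_const
      ((n : ℝ) + 1)).congr_deriv ?_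
    push_cast
    field_simp
  have parts := integral_mul_deriv_eq_deriv_mul_of_hasDerivAt hg.continuousOn_primitive
    (by fun_prop : Continuous fun y => -(b - y) ^ (n + 1) / (n + 1)).continuousOn
    (fun x hx => hg.hasDerivAt_primitive hx) (fun x _ => hv x) hg.intervalIntegrable
    ((by fun_prop : Continuous fun y => (b - y) ^ n).intervalIntegrable _ _)
  have hrearr : ∀ y, g y * ((b - y) ^ (n + 1) / (n + 1)) = (b - y) ^ (n + 1) * g y / (n + 1) :=
    fun y => by ring
  simp only [mul_comm _ (∫ t in a..(_ : ℝ), g t)]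
  rw [parts]
  simp [neg_div, hrearr, intervalIntegral.integral_div]

theorem integral_sub_pow_mul_eq_factorial_mul_iterInt {a b : ℝ} {f : ℝ → ℝ}
    (hf : ContinuousOn f [[a, b]]) (n : ℕ) :
    ∫ y in a..b, (b - y) ^ n * f y = n ! * iterInt a (n + 1) f b := by
  induction n generalizing f with
  | zero => simp [iterInt]
  | succ n ih =>
    calc ∫ y in a..b, (b - y) ^ (n + 1) * f y
        = (n + 1) * ∫ y in a..b, (b - y) ^ n * ∫ t in a..y, f t := by
          rw [integral_sub_pow_mul_primitive hf]
          field_simp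
      _ = (n + 1) * (n ! * iterInt a (n + 1) (fun x => ∫ t in a..x, f t) b) := by
          rw [ih hf.continuousOn_primitive]
      _ = (n + 1)! * iterInt a (n + 2) f b := by
          rw [iterInt_succ' a (n + 1), factorial_succ]
          push_cast
          ring

theorem cauchy_repeated_integration (n : ℕ) (hn : 0 < n) (a x : ℝ) (hax : a ≤ x)
    (f : ℝ → ℝ) (hf : ContinuousOn f (Set.Icc a x)) :
    (1 / Real.Gamma n) * ∫ y in a..x, (x - y) ^ ((n : ℝ) - 1) * f y = iterInt a n f x := by
  obtain ⟨m, rfl⟩ : ∃ m, n = m + 1 := ⟨n - 1, by omega⟩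
  have hexp : ((m + 1 : ℕ) : ℝ) - 1 = m := by push_cast; ring
  have hGamma : Gamma ((m + 1 : ℕ) : ℝ) = m ! := by rw [Nat.cast_succ, Gamma_nat_eq_factorial]
  rw [← uIcc_of_le hax] at hf
  simp only [hexp, rpow_natCast, hGamma, integral_sub_pow_mul_eq_factorial_mul_iterInt hf]
  field_simp
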